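/- arXiv:2312.15397 — 3 statements merged into one kernel-verified Lean document; each statement's English description precedes it below -/
import Mathlib

section
/- Let S ⊆ ℝᴺ be the ℝ-linear span of a set of vectors all of whose coordinates are rational, let D₁, …, D_m ∈ ℚᴺ, and let v₀ = (v₁⁰, …, v_m⁰) ∈ ℝᵐ be such that ∑_{i=1}^{m} vᵢ⁰ Dᵢ ∈ S. Then ∑_{i=1}^{m} vᵢ Dᵢ ∈ S for every v = (v₁, …, v_m) in the rational envelope of v₀. -/
open Finset Matrix Module

/-- A subset `W ⊆ ℝᵐ` is a rational affine subspace if it is the solution set of finitely many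
affine equations with rational coefficients. -/
def IsRatAffine (m : ℕ) (W : Set (Fin m → ℝ)) : Prop :=
  ∃ (s : ℕ) (q : Fin s → Fin m → ℚ) (c : Fin s → ℚ),
    W = {x : Fin m → ℝ | ∀ j : Fin s, (∑ i, (q j i : ℝ) * x i) = (c j : ℝ)}

/-- The rational envelope of `v₀ ∈ ℝᵐ`: the intersection of all rational affine subspaces of
`ℝᵐ` containing `v₀` (= the smallest such subspace). -/
def ratEnvelope (m : ℕ) (v₀ : Fin m → ℝ) : Set (Fin m → ℝ) :=
  {x : Fin m → ℝ | ∀ W : Set (Fin m → ℝ), IsRatAffine m W → v₀ ∈ W → x ∈ W}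


lemma gram_det_ne_zero {s N : ℕ} (A : Matrix (Fin s) (Fin N) ℚ)
    (h : LinearIndependent ℚ A) : (A * Aᵀ).det ≠ 0 := by
  rw [Ne, ← Matrix.exists_mulVec_eq_zero_iff]
  rintro ⟨v, hv, hMv⟩
  have hsym : (A * Aᵀ) *ᵥ v = v ᵥ* (A * Aᵀ) := by
    rw [← Matrix.mulVec_transpose, Matrix.transpose_mul, Matrix.transpose_transpose]
  have h2 : (v ᵥ* A) ⬝ᵥ (v ᵥ* A) = 0 := by
    have e1 : (v ᵥ* (A * Aᵀ)) ⬝ᵥ v = (v ᵥ* A) ⬝ᵥ (v ᵥ* A) := by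
      rw [← Matrix.vecMul_vecMul, ← Matrix.dotProduct_mulVec, Matrix.mulVec_transpose]
    rw [← e1, ← hsym, hMv, zero_dotProduct]
  have h3 : v ᵥ* A = 0 := dotProduct_self_eq_zero.mp h2
  refine hv (funext fun i => Fintype.linearIndependent_iff.mp h v ?_ i)
  funext j
  have := congrFun h3 j
  simpa [Matrix.vecMul, dotProduct, mul_comm] using this

/-- ℚ-linearly independent rational vectors remain ℝ-linearly independent. -/
lemma coeLI {s N : ℕ} (A : Matrix (Fin s) (Fin N) ℚ) (h : LinearIndependent ℚ A) :
    LinearIndependent ℝ (fun i j => ((A i j : ℝ))) := by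
  set A' : Matrix (Fin s) (Fin N) ℝ := A.map (Rat.cast : ℚ → ℝ) with hA'
  have hdet : (A' * A'ᵀ).det ≠ 0 := by
    have hmap : A' * A'ᵀ = (Rat.castHom ℝ).mapMatrix (A * Aᵀ) := by
      ext i j
      simp [Matrix.mul_apply, A', Matrix.map_apply]
    rw [hmap, ← RingHom.map_det]
    simpa using gram_det_ne_zero A h
  have hunit : IsUnit (A' * A'ᵀ) := by
    rw [Matrix.isUnit_iff_isUnit_det]
    exact isUnit_iff_ne_zero.mpr hdet
  rw [Fintype.linearIndependent_iff]
  intro g hg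
  have hg' : g ᵥ* A' = 0 := by
    funext j
    have := congrFun hg j
    simpa [Matrix.vecMul, dotProduct, A', mul_comm] using this
  have hgG : g ᵥ* (A' * A'ᵀ) = 0 := by
    rw [← Matrix.vecMul_vecMul, hg', Matrix.zero_vecMul]
  have hinj := Matrix.vecMul_injective_iff_isUnit.mpr hunit
  have : g = 0 :=
    hinj (show g ᵥ* (A' * A'ᵀ) = 0 ᵥ* (A' * A'ᵀ) by rw [hgG, Matrix.zero_vecMul])
  exact fun i => congrFun this i

lemma finrank_ker_mulVecLin {F : Type*} [Field F] {s N : ℕ} (A : Matrix (Fin s) (Fin N) F)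
    (h : LinearIndependent F A) :
    finrank F (LinearMap.ker A.mulVecLin) = N - s := by
  have h1 := A.mulVecLin.finrank_range_add_finrank_ker
  have h2 : finrank F (LinearMap.range A.mulVecLin) = s := by
    have := h.rank_matrix
    simpa [Matrix.rank] using this
  simp only [finrank_pi, Fintype.card_fin] at h1
  omega

/-- let `S ⊆ ℝᴺ` be the `ℝ`-linear span of a set of vectors with rational
coordinates, `D₁, …, D_m ∈ ℚᴺ`, and `v₀ ∈ ℝᵐ` with `∑ vᵢ⁰ Dᵢ ∈ S`.  Then `∑ vᵢ Dᵢ ∈ S` for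
every `v` in the rational envelope of `v₀`. -/
theorem span_membership_on_ratEnvelope (N m : ℕ) (T : Set (Fin N → ℝ))
    (hT : ∀ t ∈ T, ∀ j : Fin N, ∃ r : ℚ, t j = (r : ℝ))
    (D : Fin m → Fin N → ℚ) (v₀ : Fin m → ℝ)
    (h : (∑ i, v₀ i • fun t => (D i t : ℝ)) ∈ Submodule.span ℝ T) :
    ∀ v ∈ ratEnvelope m v₀,
      (∑ i, v i • fun t => (D i t : ℝ)) ∈ Submodule.span ℝ T := by
  classical
  set S := Submodule.span ℝ T with hS
  -- a finite linearly independent subfamily of T spanning S, with rational entries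
  obtain ⟨bs, hbsT, hbs_span, hbs_li⟩ := exists_linearIndependent ℝ T
  have hfin : bs.Finite := hbs_li.set_finite_of_isNoetherian
  haveI := hfin.fintype
  set n := Fintype.card bs with hn
  let e : Fin n ≃ bs := (Fintype.equivFin ↥bs).symm
  set t : Fin n → (Fin N → ℝ) := fun i => ((e i : Fin N → ℝ)) with ht
  have htT : ∀ i, t i ∈ T := fun i => hbsT (e i).2
  have ht_li : LinearIndependent ℝ t := hbs_li.comp e e.injective
  have ht_range : Set.range t = bs :=
    (e.surjective.range_comp Subtype.val).trans Subtype.range_coe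
  have ht_span : Submodule.span ℝ (Set.range t) = S := by
    rw [ht_range, hbs_span]
  -- rational representatives
  have hrat : ∀ i j, ∃ r : ℚ, t i j = (r : ℝ) := fun i j => hT (t i) (htT i) j
  choose u hu using hrat
  have hu_li : LinearIndependent ℚ u := by
    rw [Fintype.linearIndependent_iff]
    intro g hg
    have hreal : ∑ i, (g i : ℝ) • t i = 0 := by
      funext j
      have hgj := congrFun hg j
      simp only [Finset.sum_apply, Pi.smul_apply, Pi.zero_apply, smul_eq_mul] at hgj ⊢
      have : ∑ i, (g i : ℝ) * t i j = ((∑ i, g i * u i j : ℚ) : ℝ) := by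
        push_cast
        exact Finset.sum_congr rfl fun i _ => by rw [hu]
      rw [this, hgj, Rat.cast_zero]
    intro i
    exact_mod_cast Fintype.linearIndependent_iff.mp ht_li (fun i => (g i : ℝ)) hreal i
  -- kernel over ℚ of the matrix with rows `u`
  set M : Matrix (Fin n) (Fin N) ℚ := Matrix.of u with hM
  set V' := LinearMap.ker M.mulVecLin with hV'
  set s := finrank ℚ V' with hs
  have hVdim : s = N - n := finrank_ker_mulVecLin M hu_li
  let bb : Basis (Fin s) ℚ V' := Module.finBasis ℚ V'
  set B : Matrix (Fin s) (Fin N) ℚ := Matrix.of (fun l => (bb l : Fin N → ℚ)) with hB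
  have hB_li : LinearIndependent ℚ B := by
    have h1 := bb.linearIndependent
    exact h1.map' V'.subtype (Submodule.ker_subtype V')
  set B' : Matrix (Fin s) (Fin N) ℝ := Matrix.of (fun l j => ((B l j : ℝ))) with hB'
  have hB'_li : LinearIndependent ℝ B' := coeLI B hB_li
  set K := LinearMap.ker B'.mulVecLin with hK
  have hKdim : finrank ℝ K = N - s := finrank_ker_mulVecLin B' hB'_li
  -- S ≤ K
  have hSK : S ≤ K := by
    rw [← ht_span, Submodule.span_le]
    rintro x ⟨i, rfl⟩
    show t i ∈ K
    rw [hK, LinearMap.mem_ker]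
    funext l
    have hmem : M.mulVecLin (bb l : Fin N → ℚ) = 0 := (bb l).2
    have hml : ∑ j, u i j * (bb l : Fin N → ℚ) j = 0 := by
      have := congrFun hmem i
      simp only [Matrix.mulVecLin_apply, Matrix.mulVec, dotProduct, hM,
        Matrix.of_apply, Pi.zero_apply] at this
      exact this
    have : (B'.mulVecLin (t i)) l = ((∑ j, u i j * (bb l : Fin N → ℚ) j : ℚ) : ℝ) := by
      simp only [Matrix.mulVecLin_apply, Matrix.mulVec, dotProduct]
      push_cast
      refine Finset.sum_congr rfl fun j _ => ?_
      rw [hu]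
      simp [hB', hB, mul_comm]
    rw [Pi.zero_apply, this, hml, Rat.cast_zero]
  -- dimension count
  have hSdim : finrank ℝ S = n := by
    rw [← ht_span, finrank_span_eq_card ht_li, Fintype.card_fin]
  have hnN : n ≤ N := by
    have h1 := Submodule.finrank_le S
    rw [hSdim] at h1
    simpa [finrank_pi] using h1
  have hSeqK : S = K := by
    refine Submodule.eq_of_le_of_finrank_le hSK ?_
    rw [hKdim, hSdim, hVdim]
    omega
  -- the rational linear system cutting out the condition
  set q : Fin s → Fin m → ℚ := fun l i => ∑ j, B l j * D i j with hq
  have key : ∀ w : Fin m → ℝ,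
      ((∑ i, w i • fun k => (D i k : ℝ)) ∈ S) ↔
        ∀ l : Fin s, (∑ i, (q l i : ℝ) * w i) = ((0 : ℚ) : ℝ) := by
    intro w
    rw [hSeqK, hK, LinearMap.mem_ker]
    rw [funext_iff]
    apply forall_congr'
    intro l
    have hlhs : (B'.mulVecLin (∑ i, w i • fun k => (D i k : ℝ))) l
        = ∑ i, (q l i : ℝ) * w i := by
      simp only [Matrix.mulVecLin_apply, Matrix.mulVec, dotProduct]
      have hx : ∀ j, (∑ i, w i • fun k => (D i k : ℝ)) j = ∑ i, w i * (D i j : ℝ) := by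
        intro j
        simp [Finset.sum_apply]
      calc ∑ j, B' l j * (∑ i, w i • fun k => (D i k : ℝ)) j
          = ∑ j, ∑ i, (B l j : ℝ) * (w i * (D i j : ℝ)) := by
            refine Finset.sum_congr rfl fun j _ => ?_
            rw [hx j, Finset.mul_sum]
            rfl
        _ = ∑ i, ∑ j, (B l j : ℝ) * (w i * (D i j : ℝ)) := Finset.sum_comm
        _ = ∑ i, (q l i : ℝ) * w i := by
            refine Finset.sum_congr rfl fun i _ => ?_
            rw [hq]
            push_cast
            rw [Finset.sum_mul]
            exact Finset.sum_congr rfl fun j _ => by ring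
    rw [hlhs, Pi.zero_apply, Rat.cast_zero]
  -- conclude via the rational affine set
  intro v hv
  have hWrat : IsRatAffine m
      {x : Fin m → ℝ | ∀ l : Fin s, (∑ i, (q l i : ℝ) * x i) = (((fun _ : Fin s => (0:ℚ)) l : ℝ))} :=
    ⟨s, q, fun _ => 0, rfl⟩
  have hv₀W : v₀ ∈ {x : Fin m → ℝ | ∀ l : Fin s, (∑ i, (q l i : ℝ) * x i)
      = (((fun _ : Fin s => (0:ℚ)) l : ℝ))} := (key v₀).mp h
  have hvW := hv _ hWrat hv₀W
  exact (key v).mpr hvW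
end

section
/- Let T : ℝᵐ → ℝⁿ be an affine map defined over ℚ and let v₀ ∈ ℝᵐ. Then the image under T of the rational envelope of v₀ equals the rational envelope of T(v₀). -/
open Finset

/-!
A point `x` lies in the rational envelope of `v` iff `∑ qᵢ xᵢ = ∑ qᵢ vᵢ` for every `q` in the
`ℚ`-space `S` of rational `q` with `∑ qᵢ vᵢ ∈ ℚ`; so the envelope is `v + S^⊥`, and `T` clearly
maps it into the envelope of `T v`. Conversely, `y` in the envelope of `T v` is hit once we solve
`A u = y - T v` with `u ⊥ S`. Over `ℚ` such a system is solvable by duality as soon as the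
right-hand side is orthogonal to every `p` with `pA ∈ S`. A real right-hand side is a finite
combination `∑ eₜ cₜ` of rational vectors `cₜ` with `ℚ`-independent reals `eₜ`, and the real system
splits into the rational systems with right-hand sides `cₜ`.
-/

open Matrix

section LinearAlgebra

variable {K : Type*} [Field K] {ι κ : Type*} [Fintype ι] [Fintype κ]

theorem Submodule.exists_dotProduct_ne_zero_of_notMem {W : Submodule K (ι → K)} {z : ι → K}
    (hz : z ∉ W) : ∃ p : ι → K, (∀ w ∈ W, p ⬝ᵥ w = 0) ∧ p ⬝ᵥ z ≠ 0 := by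
  classical
  obtain ⟨f, hfz, hfW⟩ := W.exists_dual_map_eq_bot_of_notMem hz inferInstance
  have hf : ∀ w, (dotProductEquiv K ι).symm f ⬝ᵥ w = f w := fun w => by
    rw [← dotProductEquiv_apply_apply, LinearEquiv.apply_symm_apply]
  refine ⟨(dotProductEquiv K ι).symm f, fun w hw => ?_, by rwa [hf]⟩
  rw [hf, ← Submodule.mem_bot K, ← hfW]
  exact Submodule.mem_map_of_mem hw

theorem Matrix.exists_mem_orthogonalBilin_mulVec_eq (A : Matrix ι κ K) (S : Submodule K (κ → K))
    {w : ι → K} (hw : ∀ p, p ᵥ* A ∈ S → p ⬝ᵥ w = 0) :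
    ∃ u ∈ S.orthogonalBilin (dotProductBilin K K), A *ᵥ u = w := by
  by_contra! hne
  obtain ⟨p, hpR, hpw⟩ := Submodule.exists_dotProduct_ne_zero_of_notMem
    (W := (S.orthogonalBilin (dotProductBilin K K)).map A.mulVecLin) (by simpa using hne)
  refine hpw (hw p ?_)
  by_contra hpS
  obtain ⟨u, huS, hpu⟩ := Submodule.exists_dotProduct_ne_zero_of_notMem hpS
  have hu : u ∈ S.orthogonalBilin (dotProductBilin K K) := fun q hq => by
    simpa [dotProduct_comm] using huS q hq
  rw [dotProduct_comm, ← dotProduct_mulVec] at hpu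
  exact hpu (hpR _ (Submodule.mem_map_of_mem hu))

variable {V : Type*} [AddCommGroup V] [Module K V]

theorem exists_linearIndependent_sum_smul_eq (z : ι → V) :
    ∃ (k : ℕ) (e : Fin k → V) (c : Fin k → ι → K),
      LinearIndependent K e ∧ ∀ i, ∑ t, c t i • e t = z i := by
  let W := Submodule.span K (Set.range z)
  have : FiniteDimensional K W := FiniteDimensional.span_of_finite K (Set.finite_range z)
  let b := Module.finBasis K W
  refine ⟨_, fun t => b t, fun t i => b.repr ⟨z i, Submodule.subset_span ⟨i, rfl⟩⟩ t,
    b.linearIndependent.map' W.subtype W.ker_subtype, fun i => ?_⟩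
  simpa only [Submodule.coe_sum, Submodule.coe_smul] using
    congrArg Subtype.val (b.sum_repr ⟨z i, Submodule.subset_span ⟨i, rfl⟩⟩)

theorem sum_smul_sum_smul_eq_sum_dotProduct_smul {k : ℕ} (q : κ → K) (u : Fin k → κ → K)
    (e : Fin k → V) : ∑ j, q j • ∑ t, u t j • e t = ∑ t, (q ⬝ᵥ u t) • e t := by
  simp only [Finset.smul_sum, smul_smul, dotProduct, Finset.sum_smul]
  exact Finset.sum_comm

theorem Matrix.exists_orthogonal_sum_smul_eq (A : Matrix ι κ K) (S : Submodule K (κ → K))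
    {w : ι → V} (hw : ∀ p : ι → K, p ᵥ* A ∈ S → ∑ i, p i • w i = 0) :
    ∃ u : κ → V, (∀ q ∈ S, ∑ j, q j • u j = 0) ∧ ∀ i, ∑ j, A i j • u j = w i := by
  obtain ⟨k, e, c, he, hc⟩ := exists_linearIndependent_sum_smul_eq (K := K) w
  have hcoord : ∀ t p, p ᵥ* A ∈ S → p ⬝ᵥ c t = 0 := by
    intro t p hp
    refine Fintype.linearIndependent_iff.mp he (fun t => p ⬝ᵥ c t) ?_ t
    rw [← sum_smul_sum_smul_eq_sum_dotProduct_smul]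
    simpa only [hc] using hw p hp
  choose u hu hAu using fun t => A.exists_mem_orthogonalBilin_mulVec_eq S (hcoord t)
  refine ⟨fun j => ∑ t, u t j • e t, fun q hq => ?_, fun i => ?_⟩
  · rw [sum_smul_sum_smul_eq_sum_dotProduct_smul]
    exact Finset.sum_eq_zero fun t _ => by
      rw [← dotProductBilin_apply_apply K K, hu t q hq, zero_smul]
  · rw [sum_smul_sum_smul_eq_sum_dotProduct_smul (A i), ← hc]
    exact Finset.sum_congr rfl fun t _ => by rw [← hAu t]; rfl

end LinearAlgebra

noncomputable def ratAffine {m n : ℕ} (A : Fin n → Fin m → ℚ) (b : Fin n → ℚ) (x : Fin m → ℝ) :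
    Fin n → ℝ :=
  fun j => (∑ i, (A j i : ℝ) * x i) + (b j : ℝ)

/-- `(1 : Submodule ℚ ℝ)` is the copy of `ℚ` in `ℝ`: these are the `q` with `∑ qᵢ vᵢ ∈ ℚ`. -/
noncomputable def ratRelations {m : ℕ} (v : Fin m → ℝ) : Submodule ℚ (Fin m → ℚ) :=
  (1 : Submodule ℚ ℝ).comap (Fintype.linearCombination ℚ v)

theorem mem_ratRelations {m : ℕ} {v : Fin m → ℝ} {q : Fin m → ℚ} :
    q ∈ ratRelations v ↔ ∃ c : ℚ, ∑ i, (q i : ℝ) * v i = c := by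
  simp [ratRelations, Submodule.mem_one, Fintype.linearCombination_apply, Rat.smul_def, eq_comm]

theorem mem_ratEnvelope_iff {m : ℕ} {v x : Fin m → ℝ} :
    x ∈ ratEnvelope m v ↔
      ∀ (q : Fin m → ℚ) (c : ℚ), ∑ i, (q i : ℝ) * v i = c → ∑ i, (q i : ℝ) * x i = c := by
  refine ⟨fun hx q c hqc => ?_, ?_⟩
  · exact hx {y | ∀ _ : Fin 1, ∑ i, (q i : ℝ) * y i = c} ⟨1, fun _ => q, fun _ => c, rfl⟩
      (fun _ => hqc) 0
  · rintro hx W ⟨s, q, c, rfl⟩ hv j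
    exact hx (q j) (c j) (hv j)

section Affine

variable {m n : ℕ} (A : Fin n → Fin m → ℚ) (b : Fin n → ℚ)

theorem sum_mul_ratAffine (p : Fin n → ℚ) (x : Fin m → ℝ) :
    ∑ r, (p r : ℝ) * ratAffine A b x r = ∑ i, ((p ᵥ* A) i : ℝ) * x i + ((p ⬝ᵥ b : ℚ) : ℝ) := by
  simp only [ratAffine, vecMul, dotProduct, mul_add, Finset.sum_add_distrib, Finset.mul_sum,
    Finset.sum_mul, Rat.cast_sum, Rat.cast_mul, mul_assoc]
  rw [Finset.sum_comm]

theorem ratAffine_mem_ratEnvelope {v x : Fin m → ℝ} (hx : x ∈ ratEnvelope m v) :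
    ratAffine A b x ∈ ratEnvelope n (ratAffine A b v) := by
  rw [mem_ratEnvelope_iff] at hx ⊢
  intro p d hpd
  rw [sum_mul_ratAffine] at hpd ⊢
  rw [hx (p ᵥ* A) (d - p ⬝ᵥ b) (by push_cast; linarith)]
  push_cast
  ring

theorem exists_mem_ratEnvelope_ratAffine_eq {y : Fin n → ℝ} {v : Fin m → ℝ}
    (hy : y ∈ ratEnvelope n (ratAffine A b v)) :
    ∃ x ∈ ratEnvelope m v, ratAffine A b x = y := by
  obtain ⟨u, hu, hAu⟩ := Matrix.exists_orthogonal_sum_smul_eq A (ratRelations v)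
    (w := y - ratAffine A b v) fun p hp => by
      obtain ⟨c, hc⟩ := mem_ratRelations.mp hp
      have hpv : ∑ r, (p r : ℝ) * ratAffine A b v r = ((c + p ⬝ᵥ b : ℚ) : ℝ) := by
        rw [sum_mul_ratAffine, hc]; push_cast; ring
      simp only [Pi.sub_apply, Rat.smul_def, mul_sub, Finset.sum_sub_distrib,
        mem_ratEnvelope_iff.mp hy p _ hpv, hpv, sub_self]
  simp only [Rat.smul_def] at hu hAu
  refine ⟨v + u, mem_ratEnvelope_iff.mpr fun q c hqc => ?_, funext fun r => ?_⟩
  · simp only [Pi.add_apply, mul_add, Finset.sum_add_distrib, hqc,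
      hu q (mem_ratRelations.mpr ⟨c, hqc⟩), add_zero]
  · have := hAu r
    simp only [ratAffine, Pi.sub_apply, Pi.add_apply, mul_add, Finset.sum_add_distrib] at this ⊢
    linarith

end Affine

/-- a `ℚ`-defined affine map `T x = A x + b` (rational matrix `A`, rational
vector `b`) sends the rational envelope of `v₀` onto the rational envelope of `T v₀`. -/
theorem image_ratEnvelope_eq_ratEnvelope_image (m n : ℕ)
    (A : Fin n → Fin m → ℚ) (b : Fin n → ℚ)
    (T : (Fin m → ℝ) → (Fin n → ℝ))
    (hT : T = fun x => fun j => (∑ i, (A j i : ℝ) * x i) + (b j : ℝ))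
    (v₀ : Fin m → ℝ) :
    T '' ratEnvelope m v₀ = ratEnvelope n (T v₀) := by
  obtain rfl : T = ratAffine A b := hT
  ext y
  refine ⟨?_, exists_mem_ratEnvelope_ratAffine_eq A b⟩
  rintro ⟨x, hx, rfl⟩
  exact ratAffine_mem_ratEnvelope A b hx
end

section
/- Let v₀ ∈ ℝᵐ, let W be the rational envelope of v₀, let k = dim W + 1, and let U ⊆ W be an open subset (in the subspace topology of W) containing v₀. Then there exist affinely independent points v¹, …, v^k ∈ U ∩ ℚᵐ and real numbers a₁, …, a_k ∈ (0, 1] with ∑_{i=1}^{k} aᵢ = 1 and ∑_{i=1}^{k} aᵢ vⁱ = v₀; moreover, a₁, …, a_k are the unique real numbers summing to 1 with ∑ aᵢ vⁱ = v₀. -/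
open Finset

/-!
The rational envelope `W` of `v₀` is cut out by the rational vectors `q` with `q ⬝ v₀ ∈ ℚ`.
A basis of `ℚᵐ` whose first vectors span these constraints gives real coordinates, rational in
both directions, in which `W` is the slice `{y | y ∘ inl = c}` for a rational `c`. Hence `W` is
the image of `ℝⁿ`, `n = dim W`, under an injective affine map preserving rational points. In
`ℝⁿ`, the rational corner simplex `p, p + ε e₀, …, p + ε eₙ₋₁` with `p` slightly below `z₀` in
every coordinate and `ε` small contains `z₀` in its interior and lies in any given neighbourhood
of `z₀`; its image is the required simplex.
-/

open Module Topology

theorem AffineMap.sum_smul_comp_of_sum_eq_one {k V V' ι : Type*} [Ring k] [AddCommGroup V]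
    [Module k V] [AddCommGroup V'] [Module k V'] [Fintype ι] (f : V →ᵃ[k] V') (p : ι → V)
    {a : ι → k} (ha : ∑ i, a i = 1) : ∑ i, a i • f (p i) = f (∑ i, a i • p i) := by
  rw [← affineCombination_eq_linear_combination _ _ _ ha,
    ← affineCombination_eq_linear_combination _ _ _ ha, Finset.map_affineCombination _ _ _ ha]
  rfl

theorem AffineIndependent.eq_of_sum_smul_eq {k V ι : Type*} [Ring k] [AddCommGroup V] [Module k V]
    [Fintype ι] {p : ι → V} (hp : AffineIndependent k p) {a a' : ι → k} (ha : ∑ i, a i = 1)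
    (ha' : ∑ i, a' i = 1) (h : ∑ i, a' i • p i = ∑ i, a i • p i) : a' = a := by
  rw [← affineCombination_eq_linear_combination _ _ _ ha,
    ← affineCombination_eq_linear_combination _ _ _ ha'] at h
  exact (affineIndependent_iff_eq_of_fintype_affineCombination_eq k p).1 hp _ _ ha' ha h

theorem AffineMap.finrank_direction_affineSpan_range {k V V' : Type*} [DivisionRing k]
    [AddCommGroup V] [Module k V] [AddCommGroup V'] [Module k V'] {f : V →ᵃ[k] V'}
    (hf : Function.Injective f) :
    finrank k (affineSpan k (Set.range f)).direction = finrank k V := by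
  rw [← Set.image_univ, ← AffineSubspace.map_span, AffineSubspace.span_univ,
    AffineSubspace.map_direction, AffineSubspace.direction_top, Submodule.map_top,
    LinearMap.finrank_range_of_inj ((f.linear_injective_iff).2 hf)]

def Sum.elimAffineMap {α β R M : Type*} [Ring R] [AddCommGroup M] [Module R M] (c : α → M) :
    (β → M) →ᵃ[R] (α ⊕ β → M) where
  toFun := Sum.elim c
  linear := (LinearEquiv.sumArrowLequivProdArrow α β R M).symm.toLinearMap ∘ₗ LinearMap.inr R _ _
  map_vadd' z v := by ext (i | i) <;> simp

theorem exists_basis_sum_span_inl_eq {K V : Type*} [DivisionRing K] [AddCommGroup V] [Module K V]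
    [FiniteDimensional K V] (C : Submodule K V) :
    ∃ (r n : ℕ) (b : Basis (Fin r ⊕ Fin n) K V),
      Submodule.span K (Set.range (b ∘ Sum.inl)) = C := by
  obtain ⟨C', hC⟩ := C.exists_isCompl
  let b := ((finBasis K C).prod (finBasis K C')).map (C.prodEquivOfIsCompl C' hC)
  have hb : b ∘ Sum.inl = C.subtype ∘ finBasis K C := by
    ext j
    simp [b, Submodule.coe_prodEquivOfIsCompl']
  refine ⟨_, _, b, ?_⟩
  rw [hb, Set.range_comp, Submodule.span_image, (finBasis K C).span_eq, Submodule.map_top,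
    Submodule.range_subtype]

theorem Matrix.map_mul_map_eq_one {ι κ R S : Type*} [Fintype κ] [DecidableEq ι] [Semiring R]
    [Semiring S] (f : R →+* S) {A : Matrix ι κ R} {B : Matrix κ ι R} (h : A * B = 1) :
    A.map f * B.map f = 1 := by
  rw [← Matrix.map_mul, h, Matrix.map_one _ f.map_zero f.map_one]

section RatPoints

variable (ι : Type*)

noncomputable def ratPoints : Submodule ℚ (ι → ℝ) :=
  LinearMap.range ((Algebra.linearMap ℚ ℝ).compLeft ι)

variable {ι}

theorem mem_ratPoints {x : ι → ℝ} : x ∈ ratPoints ι ↔ ∀ i, ∃ r : ℚ, x i = r := by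
  refine ⟨fun ⟨q, hq⟩ i => ⟨q i, by simp [← hq]⟩, fun hx => ?_⟩
  choose q hq using hx
  exact ⟨q, funext fun i => by simp [hq]⟩

theorem ratCast_mem_ratPoints (q : ι → ℚ) : (fun i => (q i : ℝ)) ∈ ratPoints ι :=
  mem_ratPoints.2 fun i => ⟨q i, rfl⟩

theorem Pi.single_ratCast_mem_ratPoints [DecidableEq ι] (i : ι) (r : ℚ) :
    Pi.single i (r : ℝ) ∈ ratPoints ι :=
  mem_ratPoints.2 fun j => ⟨(Pi.single i r : ι → ℚ) j, by by_cases h : j = i <;> simp [h]⟩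

theorem Sum.elim_mem_ratPoints {κ : Type*} {x : ι → ℝ} {y : κ → ℝ} (hx : x ∈ ratPoints ι)
    (hy : y ∈ ratPoints κ) : Sum.elim x y ∈ ratPoints (ι ⊕ κ) := by
  rw [mem_ratPoints] at *
  rintro (i | i)
  exacts [hx i, hy i]

open scoped Matrix in
theorem Matrix.vecMul_map_ratCast_mem_ratPoints [Fintype ι] {κ : Type*} (M : Matrix ι κ ℚ)
    {x : ι → ℝ} (hx : x ∈ ratPoints ι) : x ᵥ* M.map (↑) ∈ ratPoints κ := by
  obtain ⟨q, rfl⟩ := hx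
  exact mem_ratPoints.2 fun j => ⟨(q ᵥ* M) j, (RingHom.map_vecMul (Rat.castHom ℝ) M q j).symm⟩

end RatPoints

section RationalCoordinates

variable {ι κ : Type*} [Fintype ι] [DecidableEq ι] [Fintype κ] [DecidableEq κ]

noncomputable def Module.Basis.realCoords (b : Basis κ ℚ (ι → ℚ)) : (ι → ℝ) ≃ₗ[ℝ] (κ → ℝ) :=
  Matrix.toLinearEquivRight'OfInv
    (Matrix.map_mul_map_eq_one (Rat.castHom ℝ) (b.toMatrix_mul_toMatrix_flip (Pi.basisFun ℚ ι)))
    (Matrix.map_mul_map_eq_one (Rat.castHom ℝ) ((Pi.basisFun ℚ ι).toMatrix_mul_toMatrix_flip b))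

theorem Module.Basis.realCoords_apply (b : Basis κ ℚ (ι → ℚ)) (x : ι → ℝ) (s : κ) :
    b.realCoords x s = Fintype.linearCombination ℚ x (b s) := by
  simp [realCoords, Matrix.vecMul, dotProduct, Basis.toMatrix_apply,
    Fintype.linearCombination_apply, Rat.smul_def, mul_comm]

theorem Module.Basis.realCoords_symm_mem_ratPoints (b : Basis κ ℚ (ι → ℚ)) {y : κ → ℝ}
    (hy : y ∈ ratPoints κ) : b.realCoords.symm y ∈ ratPoints ι :=
  Matrix.vecMul_map_ratCast_mem_ratPoints _ hy

end RationalCoordinates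

section RationalEnvelope

variable {m : ℕ}

/-- The rational `q` with `q ⬝ v₀ ∈ ℚ`; each cuts out a rational hyperplane through `v₀`. -/
noncomputable def ratConstraints (v₀ : Fin m → ℝ) : Submodule ℚ (Fin m → ℚ) :=
  (1 : Submodule ℚ ℝ).comap (Fintype.linearCombination ℚ v₀)

theorem Fintype.linearCombination_rat_apply {ι : Type*} [Fintype ι] (x : ι → ℝ) (q : ι → ℚ) :
    Fintype.linearCombination ℚ x q = ∑ i, (q i : ℝ) * x i := by
  simp [Fintype.linearCombination_apply, Rat.smul_def]

theorem mem_ratEnvelope_iff_s11 {v₀ x : Fin m → ℝ} :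
    x ∈ ratEnvelope m v₀ ↔ ratConstraints v₀ ≤
      LinearMap.eqLocus (Fintype.linearCombination ℚ x) (Fintype.linearCombination ℚ v₀) := by
  simp only [SetLike.le_def, LinearMap.mem_eqLocus, ratConstraints, Submodule.mem_comap,
    Submodule.mem_one, Fintype.linearCombination_rat_apply, eq_ratCast]
  constructor
  · rintro hx q ⟨c, hc⟩
    have hW : IsRatAffine m {y | ∀ _ : Fin 1, ∑ i, (q i : ℝ) * y i = c} :=
      ⟨1, fun _ => q, fun _ => c, rfl⟩
    rw [← hc]
    exact hx _ hW (fun _ => hc.symm) 0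
  · rintro hx W ⟨s, q, c, rfl⟩ hv j
    rw [← hv j]
    exact hx ⟨c j, (hv j).symm⟩

theorem mem_ratEnvelope_iff_realCoords {κ κ' : Type*} [Fintype κ] [DecidableEq κ] [Fintype κ']
    [DecidableEq κ'] {v₀ x : Fin m → ℝ} {b : Basis (κ ⊕ κ') ℚ (Fin m → ℚ)}
    (hb : Submodule.span ℚ (Set.range (b ∘ Sum.inl)) = ratConstraints v₀) :
    x ∈ ratEnvelope m v₀ ↔ ∀ j, b.realCoords x (Sum.inl j) = b.realCoords v₀ (Sum.inl j) := by
  rw [mem_ratEnvelope_iff_s11, ← hb, Submodule.span_le, Set.range_subset_iff]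
  simp [b.realCoords_apply]

theorem exists_injective_affineMap_range_eq_ratEnvelope (v₀ : Fin m → ℝ) :
    ∃ (n : ℕ) (g : (Fin n → ℝ) →ᵃ[ℝ] (Fin m → ℝ)), Function.Injective g ∧
      Set.range g = ratEnvelope m v₀ ∧ ∀ z ∈ ratPoints (Fin n), g z ∈ ratPoints (Fin m) := by
  obtain ⟨r, n, b, hb⟩ := exists_basis_sum_span_inl_eq (ratConstraints v₀)
  set E := b.realCoords
  set c : Fin r → ℝ := fun j => E v₀ (Sum.inl j)
  have hc : c ∈ ratPoints (Fin r) := by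
    refine mem_ratPoints.2 fun j => ?_
    have hj : b (Sum.inl j) ∈ ratConstraints v₀ := hb ▸ Submodule.subset_span ⟨j, rfl⟩
    obtain ⟨q, hq⟩ := Submodule.mem_one.1 hj
    exact ⟨q, by simp [c, E, b.realCoords_apply, ← hq]⟩
  refine ⟨n, E.symm.toAffineMap.comp (Sum.elimAffineMap c), ?_, ?_, fun z hz =>
    b.realCoords_symm_mem_ratPoints (Sum.elim_mem_ratPoints hc hz)⟩
  · exact E.symm.injective.comp fun z z' h => funext fun j => congrFun h (Sum.inr j)
  · ext x
    rw [mem_ratEnvelope_iff_realCoords hb]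
    constructor
    · rintro ⟨z, rfl⟩ j
      simp [Sum.elimAffineMap, c, E]
    · intro hx
      refine ⟨fun j => E x (Sum.inr j), E.symm_apply_eq.2 (funext ?_)⟩
      rintro (j | j)
      exacts [(hx j).symm, rfl]

end RationalEnvelope

section CornerSimplex

variable {k : Type*} {n : ℕ}

def cornerSimplex [AddMonoid k] (p : Fin n → k) (ε : k) : Fin (n + 1) → Fin n → k :=
  Fin.cons p fun j => p + Pi.single j ε

theorem sum_smul_cornerSimplex [CommRing k] (p : Fin n → k) (ε : k) {a : Fin (n + 1) → k}
    (ha : ∑ i, a i = 1) : ∑ i, a i • cornerSimplex p ε i = p + ε • Fin.tail a := by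
  rw [Fin.sum_univ_succ] at ha ⊢
  simp only [cornerSimplex, Fin.cons_zero, Fin.cons_succ, smul_add, sum_add_distrib, ← sum_smul,
    ← add_assoc, ← add_smul, ha, one_smul]
  congr 1
  ext j
  simp [Pi.single_apply, Fin.tail, mul_comm]

theorem affineIndependent_cornerSimplex [Field k] (p : Fin n → k) {ε : k} (hε : ε ≠ 0) :
    AffineIndependent k (cornerSimplex p ε) := by
  rw [affineIndependent_iff_eq_of_fintype_affineCombination_eq]
  intro a a' ha ha' h
  rw [affineCombination_eq_linear_combination _ _ _ ha,
    affineCombination_eq_linear_combination _ _ _ ha', sum_smul_cornerSimplex _ _ ha,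
    sum_smul_cornerSimplex _ _ ha'] at h
  have hsucc : ∀ j : Fin n, a j.succ = a' j.succ :=
    congrFun (smul_right_injective _ hε (add_left_cancel h))
  ext i
  refine Fin.cases ?_ hsucc i
  rw [Fin.sum_univ_succ] at ha ha'
  simp only [hsucc] at ha
  linear_combination ha - ha'

theorem exists_pos_sum_smul_cornerSimplex_eq [Field k] [LinearOrder k] [IsStrictOrderedRing k]
    {p z : Fin n → k} {ε : k} (hpz : ∀ j, p j < z j) (hε : ∑ j, (z j - p j) < ε) :
    ∃ a : Fin (n + 1) → k, (∀ i, 0 < a i) ∧ ∑ i, a i = 1 ∧ ∑ i, a i • cornerSimplex p ε i = z := by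
  have hε0 : 0 < ε := (sum_nonneg fun j _ => (sub_pos.2 (hpz j)).le).trans_lt hε
  let a : Fin (n + 1) → k := Fin.cons (1 - ∑ j, (z j - p j) / ε) fun j => (z j - p j) / ε
  have ha : ∑ i, a i = 1 := by simp [a, Fin.sum_univ_succ]
  refine ⟨a, fun i => ?_, ha, ?_⟩
  · refine Fin.cases ?_ (fun j => div_pos (sub_pos.2 (hpz j)) hε0) i
    simp only [a, Fin.cons_zero]
    rw [← sum_div, sub_pos, div_lt_one hε0]
    exact hε
  · rw [sum_smul_cornerSimplex _ _ ha]
    ext j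
    simp only [Pi.add_apply, Pi.smul_apply, smul_eq_mul, Fin.tail, a, Fin.cons_succ]
    rw [mul_div_cancel₀ _ hε0.ne', add_sub_cancel]

theorem dist_cornerSimplex_le (p : Fin n → ℝ) (ε : ℝ) (i : Fin (n + 1)) :
    dist (cornerSimplex p ε i) p ≤ |ε| := by
  refine Fin.cases ?_ (fun j => ?_) i
  · simp [cornerSimplex]
  · simp [cornerSimplex, dist_eq_norm, Pi.norm_single]

theorem cornerSimplex_mem_ratPoints {p : Fin n → ℝ} (hp : p ∈ ratPoints (Fin n)) (ε : ℚ)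
    (i : Fin (n + 1)) : cornerSimplex p (ε : ℝ) i ∈ ratPoints (Fin n) :=
  Fin.cases hp (fun j => add_mem hp (Pi.single_ratCast_mem_ratPoints j ε)) i

end CornerSimplex

theorem exists_rat_simplex_mem_nhds {n : ℕ} {z₀ : Fin n → ℝ} {S : Set (Fin n → ℝ)} (hS : S ∈ 𝓝 z₀) :
    ∃ w : Fin (n + 1) → Fin n → ℝ, (∀ i, w i ∈ S ∩ ratPoints (Fin n)) ∧ AffineIndependent ℝ w ∧
      ∃ a : Fin (n + 1) → ℝ, (∀ i, a i ∈ Set.Ioc 0 1) ∧ ∑ i, a i = 1 ∧ ∑ i, a i • w i = z₀ := by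
  obtain ⟨η, hη, hball⟩ := Metric.mem_nhds_iff.1 hS
  obtain ⟨ε, hε, hεη⟩ := exists_rat_btwn (half_pos hη)
  -- `p` lies below `z₀` by less than `ε / (n + 1)` in each coordinate, so the vertex `p` of the
  -- corner simplex keeps a positive weight.
  have hδ : ∀ j, ∃ q : ℚ, z₀ j - ε / (n + 1) < q ∧ (q : ℝ) < z₀ j := fun j =>
    exists_rat_btwn (sub_lt_self _ (by positivity))
  choose q hq using hδ
  set p : Fin n → ℝ := fun j => q j
  have hpz : dist p z₀ < η / 2 := by
    refine (dist_pi_lt_iff (half_pos hη)).2 fun j => ?_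
    rw [Real.dist_eq, abs_sub_lt_iff]
    have : (ε : ℝ) / (n + 1) ≤ ε := div_le_self hε.le (by linarith [n.cast_nonneg (α := ℝ)])
    constructor <;> linarith [hq j]
  have hsum : ∑ j, (z₀ j - p j) < ε := calc
    ∑ j, (z₀ j - p j) ≤ ∑ _j : Fin n, (ε : ℝ) / (n + 1) :=
      sum_le_sum fun j _ => by linarith [(hq j).1]
    _ = n / (n + 1) * ε := by simp only [sum_const, card_univ, Fintype.card_fin, nsmul_eq_mul]; ring
    _ < ε := mul_lt_of_lt_one_left hε ((div_lt_one (by positivity)).2 (lt_add_one _))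
  obtain ⟨a, ha, ha1, hz⟩ := exists_pos_sum_smul_cornerSimplex_eq (fun j => (hq j).2) hsum
  refine ⟨cornerSimplex p ε, fun i => ⟨hball ?_, cornerSimplex_mem_ratPoints
    (ratCast_mem_ratPoints q) ε i⟩, affineIndependent_cornerSimplex p hε.ne', a,
    fun i => ⟨ha i, ha1 ▸ single_le_sum (fun j _ => (ha j).le) (mem_univ i)⟩, ha1, hz⟩
  calc dist (cornerSimplex p ε i) z₀ ≤ dist (cornerSimplex p ε i) p + dist p z₀ :=
        dist_triangle _ _ _
    _ < |(ε : ℝ)| + η / 2 := add_lt_add_of_le_of_lt (dist_cornerSimplex_le p ε i) hpz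
    _ < η := by rw [abs_of_pos hε]; linarith

/-- let `W` be the rational envelope of `v₀`, `k = dim W + 1`, and `U ⊆ W` an
open subset (in the subspace topology of `W`) containing `v₀`.  Then there are affinely
independent rational points `v¹, …, v^k ∈ U ∩ ℚᵐ` and reals `a₁, …, a_k ∈ (0,1]` with
`∑ aᵢ = 1` and `∑ aᵢ vⁱ = v₀`; moreover the `aᵢ` are the unique reals summing to `1` with
`∑ aᵢ vⁱ = v₀`. -/
theorem exists_rational_affine_basis_in_open_subset (m : ℕ) (v₀ : Fin m → ℝ) (k : ℕ)
    (hk : k = Module.finrank ℝ (affineSpan ℝ (ratEnvelope m v₀)).direction + 1)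
    (U : Set (Fin m → ℝ))
    (hUopen : ∃ V : Set (Fin m → ℝ), IsOpen V ∧ U = V ∩ ratEnvelope m v₀)
    (hv₀U : v₀ ∈ U) :
    ∃ v : Fin k → Fin m → ℝ,
      (∀ i, v i ∈ U) ∧
      (∀ i, ∀ t : Fin m, ∃ r : ℚ, v i t = (r : ℝ)) ∧
      AffineIndependent ℝ v ∧
      ∃ a : Fin k → ℝ,
        (∀ i, a i ∈ Set.Ioc (0 : ℝ) 1) ∧
        (∑ i, a i) = 1 ∧
        (∑ i, a i • v i) = v₀ ∧
        ∀ a' : Fin k → ℝ, (∑ i, a' i) = 1 → (∑ i, a' i • v i) = v₀ → a' = a := by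
  obtain ⟨V, hV, rfl⟩ := hUopen
  obtain ⟨n, g, hg, hg_range, hg_rat⟩ := exists_injective_affineMap_range_eq_ratEnvelope v₀
  obtain rfl : k = n + 1 := by
    rw [hk, ← hg_range, g.finrank_direction_affineSpan_range hg, finrank_fin_fun]
  obtain ⟨z₀, rfl⟩ : v₀ ∈ Set.range g := hg_range ▸ hv₀U.2
  have hS : g ⁻¹' V ∈ 𝓝 z₀ := (hV.preimage g.continuous_of_finiteDimensional).mem_nhds hv₀U.1
  obtain ⟨w, hw, hw_ind, a, ha, ha1, hz₀⟩ := exists_rat_simplex_mem_nhds hS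
  have hv : ∑ i, a i • g (w i) = g z₀ := by rw [g.sum_smul_comp_of_sum_eq_one w ha1, hz₀]
  refine ⟨g ∘ w, fun i => ⟨(hw i).1, hg_range ▸ Set.mem_range_self _⟩,
    fun i => mem_ratPoints.1 (hg_rat _ (hw i).2), hw_ind.map' g hg, a, ha, ha1, hv,
    fun a' ha' h => (hw_ind.map' g hg).eq_of_sum_smul_eq ha1 ha' (h.trans hv.symm)⟩
end
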